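/- For the Lorenz system with r = 28, the nonzero fixed points C± = (±√72, ±√72, 27) satisfy: the Jacobian matrix at C± has one real negative eigenvalue and a pair of complex conjugate eigenvalues with positive real part (hence C± are unstable fixed points of saddle-focus type). -/

import Mathlib

/-!
Along the fixed points `x = y = s`, `z = 27` with `s² = 72`, the characteristic polynomial of the
Jacobian is the cubic `λ³ + 41/3 λ² + 304/3 λ + 1440`, which changes sign on `(-14, -41/3)` and
so has a real root `μ` there. Dividing out `λ - μ` leaves `λ² + (μ + 41/3) λ + (μ² + 41/3 μ + 304/3)`,
whose linear coefficient lies in `(-1/3, 0)` while its constant term exceeds `304/3`: the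
remaining two roots are complex conjugates with real part `-(μ + 41/3)/2 > 0`.
-/

open Polynomial Matrix

/-- Jacobian of the Lorenz system (r = 28) at a point `(x, y, z)`. -/
noncomputable def lorenzJac28 (x y z : ℝ) : Matrix (Fin 3) (Fin 3) ℝ :=
  !![-10, 10, 0; 28 - z, -1, -x; y, x, -8/3]

lemma charpoly_lorenzJac28_of_sq_eq {s : ℝ} (hs : s ^ 2 = 72) :
    (lorenzJac28 s s 27).charpoly = X ^ 3 + C (41 / 3) * X ^ 2 + C (304 / 3) * X + C 1440 := by
  rw [Matrix.charpoly, Matrix.det_fin_three]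
  refine Polynomial.funext fun t => ?_
  simp [lorenzJac28]
  linear_combination (t + 20) * hs

lemma exists_root_lorenz_cubic :
    ∃ μ ∈ Set.Ioo (-14 : ℝ) (-41 / 3), μ ^ 3 + 41 / 3 * μ ^ 2 + 304 / 3 * μ + 1440 = 0 := by
  have hf : Continuous fun t : ℝ => t ^ 3 + 41 / 3 * t ^ 2 + 304 / 3 * t + 1440 := by fun_prop
  exact intermediate_value_Ioo (by norm_num) hf.continuousOn ⟨by norm_num, by norm_num⟩

lemma cubic_eq_X_sub_C_mul_quadratic {R : Type*} [CommRing R] {a b c μ : R}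
    (hμ : μ ^ 3 + a * μ ^ 2 + b * μ + c = 0) :
    X ^ 3 + C a * X ^ 2 + C b * X + C c =
      (X - C μ) * (X ^ 2 + C (μ + a) * X + C (μ ^ 2 + a * μ + b)) := by
  have hC := congrArg C hμ
  simp only [map_add, map_mul, map_pow, map_zero] at hC ⊢
  linear_combination hC

lemma quadratic_eq_X_sub_C_mul_X_sub_C_conj {p q : ℝ} (hpq : p ^ 2 < 4 * q) :
    ∃ ζ : ℂ, ζ.re = -p / 2 ∧ ζ.im ≠ 0 ∧
      (X ^ 2 + C (p : ℂ) * X + C (q : ℂ)) = (X - C ζ) * (X - C (starRingEnd ℂ ζ)) := by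
  obtain ⟨d, hd_pos, hd_sq⟩ : ∃ d : ℝ, 0 < d ∧ d ^ 2 = q - p ^ 2 / 4 :=
    ⟨√(q - p ^ 2 / 4), Real.sqrt_pos.mpr (by linarith), Real.sq_sqrt (by linarith)⟩
  refine ⟨⟨-p / 2, d⟩, rfl, hd_pos.ne', ?_⟩
  have hconj : starRingEnd ℂ ⟨-p / 2, d⟩ = ⟨-p / 2, -d⟩ := rfl
  rw [hconj]
  refine Polynomial.funext fun t => Complex.ext ?_ ?_
  · simp only [sq, Complex.mul_re, eval_add, eval_mul, eval_sub, eval_X, eval_C, Complex.ofReal_re,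
      Complex.ofReal_im, Complex.sub_re, Complex.sub_im, Complex.add_re]
    linear_combination -hd_sq
  · simp only [sq, Complex.mul_im, eval_add, eval_mul, eval_sub, eval_X, eval_C, Complex.ofReal_re,
      Complex.ofReal_im, Complex.sub_re, Complex.sub_im, Complex.add_im]
    ring

/-- At the nonzero fixed points `C± = (±√72, ±√72, 27)` of the Lorenz system with
`r = 28`, the Jacobian has one real negative eigenvalue and a pair of complex
conjugate eigenvalues with positive real part. -/
theorem lorenz_Cpm_saddle_focus :
    ∀ s : ℝ, (s = Real.sqrt 72 ∨ s = -Real.sqrt 72) →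
    ∃ (μ : ℝ) (ζ : ℂ), μ < 0 ∧ 0 < ζ.re ∧ ζ.im ≠ 0 ∧
      ((lorenzJac28 s s 27).map (Complex.ofReal)).charpoly =
        (X - C (μ : ℂ)) * (X - C ζ) * (X - C (starRingEnd ℂ ζ)) := by
  intro s hs
  have hs2 : s ^ 2 = 72 := by
    rcases hs with rfl | rfl <;> simp
  obtain ⟨μ, ⟨hμ_gt, hμ_lt⟩, hμ⟩ := exists_root_lorenz_cubic
  obtain ⟨ζ, hζ_re, hζ_im, hζ⟩ := quadratic_eq_X_sub_C_mul_X_sub_C_conj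
    (p := μ + 41 / 3) (q := μ ^ 2 + 41 / 3 * μ + 304 / 3) (by nlinarith)
  refine ⟨μ, ζ, by linarith, by rw [hζ_re]; linarith, hζ_im, ?_⟩
  change ((lorenzJac28 s s 27).map Complex.ofRealHom).charpoly = _
  rw [charpoly_map, charpoly_lorenzJac28_of_sq_eq hs2, cubic_eq_X_sub_C_mul_quadratic hμ, mul_assoc,
    ← hζ]
  simp
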